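/- arXiv:2303.10600 — 3 statements merged into one kernel-verified Lean document; each statement's English description precedes it below -/
import Mathlib

section
/- Let V, Q be Hilbert spaces, B : V → Q' a bounded linear operator satisfying the inf-sup condition with constant β_B > 0, and let R : Q' → W' be a bounded linear operator (W a Hilbert space) whose transpose Rᵀ : W → Q satisfies ‖Rᵀw‖_Q ≥ β_R ‖w‖_W for all w ∈ W. Then the composed operator RB : V → W' satisfies the inf-sup condition: for all w ∈ W, sup_{0≠v∈V} ⟨RBv, w⟩ / ‖v‖_V ≥ β_R β_B ‖w‖_W. -/
namespace ContinuousLinearMap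

theorem exists_mem_orthogonal_ker_apply_eq
    {𝕜 V F : Type*} [RCLike 𝕜]
    [NormedAddCommGroup V] [InnerProductSpace 𝕜 V] [CompleteSpace V]
    [NormedAddCommGroup F] [NormedSpace 𝕜 F]
    (f : V →L[𝕜] F) (hf : Function.Surjective f) (y : F) :
    ∃ u ∈ (LinearMap.ker (f : V →ₗ[𝕜] F))ᗮ, f u = y := by
  set K := LinearMap.ker (f : V →ₗ[𝕜] F)
  have : CompleteSpace K := f.isClosed_ker.completeSpace_coe
  obtain ⟨v, rfl⟩ := hf y
  obtain ⟨k, hk, u, hu, rfl⟩ := K.exists_add_mem_mem_orthogonal v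
  refine ⟨u, hu, ?_⟩
  rw [map_add, show f k = 0 from hk, zero_add]

/-- Test `B.flip q` against the preimage in `(ker B)ᗮ` of the Riesz functional of `q`. -/
theorem mul_norm_le_norm_flip_of_surjective
    {V Q : Type*}
    [NormedAddCommGroup V] [InnerProductSpace ℝ V] [CompleteSpace V]
    [NormedAddCommGroup Q] [InnerProductSpace ℝ Q]
    (B : V →L[ℝ] (Q →L[ℝ] ℝ)) (hB_surj : Function.Surjective B) {β : ℝ} (hβ : 0 ≤ β)
    (hB : ∀ u ∈ (LinearMap.ker (B : V →ₗ[ℝ] (Q →L[ℝ] ℝ)))ᗮ, β * ‖u‖ ≤ ‖B u‖) (q : Q) :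
    β * ‖q‖ ≤ ‖B.flip q‖ := by
  rcases (norm_nonneg q).eq_or_lt with hq | hq
  · rw [← hq, mul_zero]
    exact norm_nonneg _
  obtain ⟨u, hu, hBu⟩ := B.exists_mem_orthogonal_ker_apply_eq hB_surj (innerSL ℝ q)
  have hu_le : β * ‖u‖ ≤ ‖q‖ := by simpa [hBu, innerSL_apply_norm] using hB u hu
  have h_apply : B.flip q u = ‖q‖ ^ 2 := by
    simp [hBu]
  have h_opNorm : ‖q‖ ^ 2 ≤ ‖B.flip q‖ * ‖u‖ :=
    h_apply ▸ (le_abs_self _).trans ((B.flip q).le_opNorm u)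
  have : β * ‖q‖ * ‖q‖ ≤ ‖B.flip q‖ * ‖q‖ :=
    calc β * ‖q‖ * ‖q‖ = β * ‖q‖ ^ 2 := by ring
      _ ≤ β * (‖B.flip q‖ * ‖u‖) := mul_le_mul_of_nonneg_left h_opNorm hβ
      _ = ‖B.flip q‖ * (β * ‖u‖) := by ring
      _ ≤ ‖B.flip q‖ * ‖q‖ := mul_le_mul_of_nonneg_left hu_le (norm_nonneg _)
  exact le_of_mul_le_mul_right this hq

end ContinuousLinearMap

theorem stmt1_general
    {V Q W : Type*}
    [NormedAddCommGroup V] [InnerProductSpace ℝ V] [CompleteSpace V]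
    [NormedAddCommGroup Q] [InnerProductSpace ℝ Q]
    [NormedAddCommGroup W] [InnerProductSpace ℝ W]
    (B : V →L[ℝ] (Q →L[ℝ] ℝ))
    (R : (Q →L[ℝ] ℝ) →L[ℝ] (W →L[ℝ] ℝ))
    (RT : W →L[ℝ] Q)
    (hdual : ∀ (q' : Q →L[ℝ] ℝ) (w : W), R q' w = q' (RT w))
    (β_B β_R : ℝ) (hβB : 0 < β_B)
    (hBsurj : Function.Surjective B)
    (hB : ∀ u ∈ (LinearMap.ker (B : V →ₗ[ℝ] (Q →L[ℝ] ℝ)))ᗮ, β_B * ‖u‖ ≤ ‖B u‖)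
    (hRT : ∀ w : W, β_R * ‖w‖ ≤ ‖RT w‖) :
    ∀ w : W, β_R * β_B * ‖w‖ ≤ ‖(R.comp B).flip w‖ := by
  intro w
  have h_transpose : (R.comp B).flip w = B.flip (RT w) := by
    ext v
    exact hdual (B v) w
  calc β_R * β_B * ‖w‖ = β_B * (β_R * ‖w‖) := by ring
    _ ≤ β_B * ‖RT w‖ := mul_le_mul_of_nonneg_left (hRT w) hβB.le
    _ ≤ ‖B.flip (RT w)‖ :=
      B.mul_norm_le_norm_flip_of_surjective hBsurj hβB.le hB (RT w)
    _ = ‖(R.comp B).flip w‖ := by rw [h_transpose]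

/-- If `B : V → Q'` satisfies the inf-sup condition with constant `β_B`
(lower bound on the orthogonal complement of its kernel, together with surjectivity)
and `R : Q' → W'` has a transpose `Rᵀ : W → Q` (characterized by `⟨Rq', w⟩ = ⟨q', Rᵀw⟩`)
satisfying `‖Rᵀw‖_Q ≥ β_R‖w‖_W`, then the composition `RB : V → W'` satisfies the
inf-sup condition with constant `β_R β_B`:
`sup_{0≠v} ⟨RBv, w⟩/‖v‖ = ‖(RB)ᵀ w‖_{V'} ≥ β_R β_B ‖w‖_W` for all `w ∈ W`. -/
theorem stmt1
    {V Q W : Type*}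
    [NormedAddCommGroup V] [InnerProductSpace ℝ V] [CompleteSpace V]
    [NormedAddCommGroup Q] [InnerProductSpace ℝ Q] [CompleteSpace Q]
    [NormedAddCommGroup W] [InnerProductSpace ℝ W] [CompleteSpace W]
    (B : V →L[ℝ] (Q →L[ℝ] ℝ))
    (R : (Q →L[ℝ] ℝ) →L[ℝ] (W →L[ℝ] ℝ))
    (RT : W →L[ℝ] Q)
    (hdual : ∀ (q' : Q →L[ℝ] ℝ) (w : W), R q' w = q' (RT w))
    (β_B β_R : ℝ) (hβB : 0 < β_B) (hβR : 0 < β_R)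
    (hBsurj : Function.Surjective B)
    (hB : ∀ u ∈ (LinearMap.ker (B : V →ₗ[ℝ] (Q →L[ℝ] ℝ)))ᗮ, β_B * ‖u‖ ≤ ‖B u‖)
    (hRT : ∀ w : W, β_R * ‖w‖ ≤ ‖RT w‖) :
    ∀ w : W, β_R * β_B * ‖w‖ ≤ ‖(R.comp B).flip w‖ :=
  stmt1_general B R RT hdual β_B β_R hβB hBsurj hB hRT
end

section
/- Let φ̂ ∈ C⁰(Γ̄̂) ∩ H¹(Γ̂) be a weight on Γ̂ = ∂B̂ × γ̂ and define the weighted extension (Ê ŵ)(x̂,s) = φ̂(x̂,s) ŵ(s). Then for every ŵ ∈ H¹(γ̂), |Ê ŵ|²_{H¹(Γ̂)} ≤ C (|φ̂|²_{H¹(Γ̂)} |D̂|² ‖ŵ‖²_{L²(γ̂)} + ‖φ̂‖²_{L²(Γ̂)} |D̂|² |ŵ|²_{H¹(γ̂)}), hence Ê is a bounded operator from H¹(γ̂) to H¹(Γ̂) with norm controlled by ‖φ̂‖_{H¹(Γ̂)}. -/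
open Real MeasureTheory

private lemma intOn {f : ℝ → ℝ} {a b : ℝ} (hf : Continuous f) :
    IntegrableOn f (Set.Ioo a b) volume :=
  hf.integrableOn_Icc.mono_set Set.Ioo_subset_Icc_self

/-- If an iterated integral of a nonneg function is bounded pointwise by `q s`
on the rectangle, it is bounded by `2π ∫ q`. -/
private lemma key (f : ℝ → ℝ → ℝ) (hf : Continuous fun p : ℝ × ℝ => f p.1 p.2)
    (hnn : ∀ x y, 0 ≤ f x y) (q : ℝ → ℝ) (hq : Continuous q)
    (hb : ∀ θ ∈ Set.Ioo (0:ℝ) (2*π), ∀ s ∈ Set.Ioo (0:ℝ) 1, f θ s ≤ q s) :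
    (∫ θ in Set.Ioo (0:ℝ) (2*π), ∫ s in Set.Ioo (0:ℝ) 1, f θ s)
      ≤ 2*π*(∫ s in Set.Ioo (0:ℝ) 1, q s) := by
  have hπ : (0:ℝ) < π := pi_pos
  have hqi : IntegrableOn q (Set.Ioo (0:ℝ) 1) := intOn hq
  set Q := ∫ s in Set.Ioo (0:ℝ) 1, q s with hQ
  have hinner0 : ∀ θ : ℝ, 0 ≤ ∫ s in Set.Ioo (0:ℝ) 1, f θ s := fun θ =>
    setIntegral_nonneg measurableSet_Ioo fun s _ => hnn θ s
  have hfc : ∀ θ : ℝ, Continuous fun s => f θ s := fun θ =>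
    hf.comp (continuous_const.prodMk continuous_id)
  have hinner : ∀ θ ∈ Set.Ioo (0:ℝ) (2*π), (∫ s in Set.Ioo (0:ℝ) 1, f θ s) ≤ Q :=
    fun θ hθ =>
      setIntegral_mono_on (intOn (hfc θ)) hqi measurableSet_Ioo (fun s hs => hb θ hθ s hs)
  have hQ0 : 0 ≤ Q := le_trans (hinner0 π) (hinner π ⟨hπ, by linarith⟩)
  calc (∫ θ in Set.Ioo (0:ℝ) (2*π), ∫ s in Set.Ioo (0:ℝ) 1, f θ s)
      ≤ ‖∫ θ in Set.Ioo (0:ℝ) (2*π), ∫ s in Set.Ioo (0:ℝ) 1, f θ s‖ := le_abs_self _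
    _ ≤ Q * (volume (Set.Ioo (0:ℝ) (2*π))).toReal := by
        refine norm_setIntegral_le_of_norm_le_const ?_ ?_
        · rw [Real.volume_Ioo]; exact ENNReal.ofReal_lt_top
        · intro θ hθ
          rw [Real.norm_eq_abs, abs_of_nonneg (hinner0 θ)]
          exact hinner θ hθ
    _ = 2*π*Q := by
        rw [Real.volume_Ioo, ENNReal.toReal_ofReal (by linarith)]; ring

set_option maxHeartbeats 1000000 in
private lemma vanish (h : ℝ → ℝ → ℝ) (hc : Continuous fun p : ℝ × ℝ => h p.1 p.2)
    (hnn : ∀ x y, 0 ≤ h x y)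
    (hz : (∫ θ in Set.Ioo (0:ℝ) (2*π), ∫ s in Set.Ioo (0:ℝ) 1, h θ s) = 0) :
    ∀ θ ∈ Set.Ioo (0:ℝ) (2*π), ∀ s ∈ Set.Ioo (0:ℝ) 1, h θ s = 0 := by
  have hπ : (0:ℝ) < π := pi_pos
  set I := Set.Ioo (0:ℝ) (2*π) with hIdef
  set J := Set.Ioo (0:ℝ) 1 with hJdef
  have hIm : MeasurableSet (I ×ˢ J) := measurableSet_Ioo.prod measurableSet_Ioo
  have hint : IntegrableOn (fun p : ℝ × ℝ => h p.1 p.2) (I ×ˢ J) volume := by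
    refine IntegrableOn.mono_set ?_
      (Set.prod_mono Set.Ioo_subset_Icc_self Set.Ioo_subset_Icc_self)
    exact hc.continuousOn.integrableOn_compact (isCompact_Icc.prod isCompact_Icc)
  have hint2 : Integrable (Function.uncurry h)
      ((volume.restrict I).prod (volume.restrict J)) := by
    rw [Measure.prod_restrict, ← Measure.volume_eq_prod]; exact hint
  have hz3 : (∫ z in I ×ˢ J, h z.1 z.2) = 0 := by
    have h1 := integral_integral hint2
    rw [hz] at h1
    rw [Measure.prod_restrict, ← Measure.volume_eq_prod] at h1
    exact h1.symm
  have h0le : (0 : ℝ × ℝ → ℝ) ≤ᵐ[volume.restrict (I ×ˢ J)] (fun p : ℝ × ℝ => h p.1 p.2) :=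
    Filter.Eventually.of_forall fun p => hnn p.1 p.2
  have hae : (fun p : ℝ × ℝ => h p.1 p.2) =ᵐ[volume.restrict (I ×ˢ J)] 0 :=
    (setIntegral_eq_zero_iff_of_nonneg_ae h0le hint).mp hz3
  have hnull : volume ({p : ℝ × ℝ | ¬ h p.1 p.2 = 0} ∩ (I ×ˢ J)) = 0 := by
    have h2 : volume.restrict (I ×ˢ J) {p : ℝ × ℝ | ¬ h p.1 p.2 = 0} = 0 := by
      have h3 := ae_iff.mp hae
      simpa using h3
    rwa [Measure.restrict_apply' hIm] at h2
  intro θ hθ s hs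
  by_contra hne
  have hpos : 0 < h θ s := lt_of_le_of_ne (hnn θ s) (Ne.symm hne)
  set U : Set (ℝ × ℝ) := (I ×ˢ J) ∩ ((fun p : ℝ × ℝ => h p.1 p.2) ⁻¹' Set.Ioi 0) with hU
  have hUopen : IsOpen U := ((isOpen_Ioo.prod isOpen_Ioo).inter (isOpen_Ioi.preimage hc))
  have hUne : U.Nonempty := ⟨(θ, s), ⟨⟨hθ, hs⟩, hpos⟩⟩
  have hUsub : U ⊆ {p : ℝ × ℝ | ¬ h p.1 p.2 = 0} ∩ (I ×ˢ J) := by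
    rintro p ⟨hp1, hp2⟩
    exact ⟨ne_of_gt hp2, hp1⟩
  have := hUopen.measure_pos volume hUne
  have := measure_mono_null hUsub hnull
  simp_all

set_option maxHeartbeats 1000000 in
/-- Weighted extension `H¹` bound on the tensor-product surface
`Γ̂ = ∂B̂ × γ̂` (parametrized by `(θ,s) ∈ (0,2π) × (0,1)`, with cross-sectional
measure `|D̂| = 2π`): for a weight `φ̂ ∈ C⁰(Γ̄̂) ∩ H¹(Γ̂)`, the weighted extension
`(Ê ŵ)(θ,s) = φ̂(θ,s) ŵ(s)` satisfies, for every `ŵ ∈ H¹(γ̂)`,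
`|Ê ŵ|²_{H¹(Γ̂)} ≤ C (|φ̂|²_{H¹(Γ̂)} |D̂|² ‖ŵ‖²_{L²(γ̂)} + ‖φ̂‖²_{L²(Γ̂)} |D̂|² |ŵ|²_{H¹(γ̂)})`,
hence `Ê` is bounded from `H¹(γ̂)` to `H¹(Γ̂)` with norm controlled by `‖φ̂‖_{H¹(Γ̂)}`. -/
theorem stmt14
    (φ : ℝ × ℝ → ℝ) (hφ : ContDiff ℝ 1 φ) :
    ∃ C > 0, ∀ w : ℝ → ℝ, ContDiff ℝ 1 w →
      (∫ θ in Set.Ioo (0 : ℝ) (2 * π), ∫ s in Set.Ioo (0 : ℝ) 1,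
          ((deriv (fun t => φ (t, s)) θ * w s) ^ 2 +
            (deriv (fun t => φ (θ, t) * w t) s) ^ 2)) ≤
        C * ((∫ θ in Set.Ioo (0 : ℝ) (2 * π), ∫ s in Set.Ioo (0 : ℝ) 1,
                ((deriv (fun t => φ (t, s)) θ) ^ 2 + (deriv (fun t => φ (θ, t)) s) ^ 2)) *
              (2 * π) ^ 2 * (∫ s in Set.Ioo (0 : ℝ) 1, (w s) ^ 2) +
            (∫ θ in Set.Ioo (0 : ℝ) (2 * π), ∫ s in Set.Ioo (0 : ℝ) 1, (φ (θ, s)) ^ 2) *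
              (2 * π) ^ 2 * (∫ s in Set.Ioo (0 : ℝ) 1, (deriv w s) ^ 2)) := by
  have hπ : (0:ℝ) < π := pi_pos
  have hφd : Differentiable ℝ φ := hφ.differentiable one_ne_zero
  have hφc : Continuous φ := hφ.continuous
  set g1 : ℝ × ℝ → ℝ := fun p => fderiv ℝ φ p (1, 0) with hg1d
  set g2 : ℝ × ℝ → ℝ := fun p => fderiv ℝ φ p (0, 1) with hg2d
  have hg1c : Continuous g1 := (hφ.continuous_fderiv one_ne_zero).clm_apply continuous_const
  have hg2c : Continuous g2 := (hφ.continuous_fderiv one_ne_zero).clm_apply continuous_const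
  have hD1 : ∀ θ s : ℝ, HasDerivAt (fun t => φ (t, s)) (g1 (θ, s)) θ := fun θ s =>
    (hφd (θ, s)).hasFDerivAt.comp_hasDerivAt θ ((hasDerivAt_id θ).prodMk (hasDerivAt_const θ s))
  have hD2 : ∀ θ s : ℝ, HasDerivAt (fun t => φ (θ, t)) (g2 (θ, s)) s := fun θ s =>
    (hφd (θ, s)).hasFDerivAt.comp_hasDerivAt s ((hasDerivAt_const s θ).prodMk (hasDerivAt_id s))
  have he1 : ∀ θ s : ℝ, deriv (fun t => φ (t, s)) θ = g1 (θ, s) := fun θ s => (hD1 θ s).deriv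
  have he2 : ∀ θ s : ℝ, deriv (fun t => φ (θ, t)) s = g2 (θ, s) := fun θ s => (hD2 θ s).deriv
  obtain ⟨M, hM⟩ := (isCompact_Icc.prod isCompact_Icc :
      IsCompact (Set.Icc (0:ℝ) (2*π) ×ˢ Set.Icc (0:ℝ) 1)).exists_bound_of_continuousOn
      (Continuous.continuousOn (hφc.prodMk (hg1c.prodMk hg2c)))
  have hM0 : 0 ≤ M := le_trans (norm_nonneg _)
    (hM (π, 1/2) ⟨⟨by linarith, by linarith⟩, by norm_num⟩)
  have hmem : ∀ θ ∈ Set.Ioo (0:ℝ) (2*π), ∀ s ∈ Set.Ioo (0:ℝ) 1,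
      (θ, s) ∈ Set.Icc (0:ℝ) (2*π) ×ˢ Set.Icc (0:ℝ) 1 := fun θ hθ s hs =>
    ⟨⟨hθ.1.le, hθ.2.le⟩, ⟨hs.1.le, hs.2.le⟩⟩
  have habs : ∀ p ∈ Set.Icc (0:ℝ) (2*π) ×ˢ Set.Icc (0:ℝ) 1,
      |φ p| ≤ M ∧ |g1 p| ≤ M ∧ |g2 p| ≤ M := fun p hp =>
    ⟨le_trans (norm_fst_le ((φ p, g1 p, g2 p))) (hM p hp),
     le_trans (le_trans (norm_fst_le ((g1 p, g2 p))) (norm_snd_le ((φ p, g1 p, g2 p)))) (hM p hp),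
     le_trans (le_trans (norm_snd_le ((g1 p, g2 p))) (norm_snd_le ((φ p, g1 p, g2 p)))) (hM p hp)⟩
  have hsq : ∀ p ∈ Set.Icc (0:ℝ) (2*π) ×ˢ Set.Icc (0:ℝ) 1,
      φ p ^ 2 ≤ M ^ 2 ∧ g1 p ^ 2 ≤ M ^ 2 ∧ g2 p ^ 2 ≤ M ^ 2 := by
    intro p hp
    obtain ⟨h1, h2, h3⟩ := habs p hp
    obtain ⟨h1a, h1b⟩ := abs_le.mp h1
    obtain ⟨h2a, h2b⟩ := abs_le.mp h2
    obtain ⟨h3a, h3b⟩ := abs_le.mp h3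
    exact ⟨sq_le_sq' h1a h1b, sq_le_sq' h2a h2b, sq_le_sq' h3a h3b⟩
  set A := ∫ θ in Set.Ioo (0:ℝ) (2*π), ∫ s in Set.Ioo (0:ℝ) 1,
      (g1 (θ, s) ^ 2 + g2 (θ, s) ^ 2) with hAd
  set Bb := ∫ θ in Set.Ioo (0:ℝ) (2*π), ∫ s in Set.Ioo (0:ℝ) 1, φ (θ, s) ^ 2 with hBd
  have hA0 : 0 ≤ A := by
    rw [hAd]
    exact setIntegral_nonneg measurableSet_Ioo fun θ _ =>
      setIntegral_nonneg measurableSet_Ioo fun s _ => by positivity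
  have hB0 : 0 ≤ Bb := by
    rw [hBd]
    exact setIntegral_nonneg measurableSet_Ioo fun θ _ =>
      setIntegral_nonneg measurableSet_Ioo fun s _ => sq_nonneg _
  by_cases hB : Bb = 0
  · -- φ vanishes on the rectangle; everything is zero
    refine ⟨1, one_pos, ?_⟩
    intro w hw
    have hwc : Continuous w := hw.continuous
    have hdwc : Continuous (deriv w) := hw.continuous_deriv le_rfl
    have hD3 : ∀ θ s : ℝ, HasDerivAt (fun t => φ (θ, t) * w t)
        (g2 (θ, s) * w s + φ (θ, s) * deriv w s) s := fun θ s =>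
      (hD2 θ s).mul ((hw.differentiable one_ne_zero s).hasDerivAt)
    have he3 : ∀ θ s : ℝ, deriv (fun t => φ (θ, t) * w t) s
        = g2 (θ, s) * w s + φ (θ, s) * deriv w s := fun θ s => (hD3 θ s).deriv
    have hB' : (∫ θ in Set.Ioo (0:ℝ) (2*π), ∫ s in Set.Ioo (0:ℝ) 1, φ (θ, s) ^ 2) = 0 := by
      rw [← hBd]; exact hB
    have hφ0 : ∀ θ ∈ Set.Ioo (0:ℝ) (2*π), ∀ s ∈ Set.Ioo (0:ℝ) 1, φ (θ, s) = 0 := by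
      intro θ hθ s hs
      have h2 : φ (θ, s) ^ 2 = 0 := vanish (fun θ s => φ (θ, s) ^ 2)
        ((hφc.comp continuous_id).pow 2) (fun x y => sq_nonneg _) hB' θ hθ s hs
      exact pow_eq_zero_iff two_ne_zero |>.mp h2
    have hg10 : ∀ θ ∈ Set.Ioo (0:ℝ) (2*π), ∀ s ∈ Set.Ioo (0:ℝ) 1, g1 (θ, s) = 0 := by
      intro θ hθ s hs
      rw [← he1 θ s]
      have hev : (fun t => φ (t, s)) =ᶠ[nhds θ] fun _ => (0:ℝ) :=
        Filter.eventuallyEq_of_mem (Ioo_mem_nhds hθ.1 hθ.2) fun t ht => hφ0 t ht s hs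
      rw [hev.deriv_eq]; exact deriv_const θ 0
    have hg20 : ∀ θ ∈ Set.Ioo (0:ℝ) (2*π), ∀ s ∈ Set.Ioo (0:ℝ) 1, g2 (θ, s) = 0 := by
      intro θ hθ s hs
      rw [← he2 θ s]
      have hev : (fun t => φ (θ, t)) =ᶠ[nhds s] fun _ => (0:ℝ) :=
        Filter.eventuallyEq_of_mem (Ioo_mem_nhds hs.1 hs.2) fun t ht => hφ0 θ hθ t ht
      rw [hev.deriv_eq]; exact deriv_const s 0
    simp only [he1, he2, he3]
    set W := ∫ s in Set.Ioo (0:ℝ) 1, (w s) ^ 2 with hWd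
    set W' := ∫ s in Set.Ioo (0:ℝ) 1, (deriv w s) ^ 2 with hW'd
    have hW0 : 0 ≤ W := setIntegral_nonneg measurableSet_Ioo fun s _ => sq_nonneg _
    have hW'0 : 0 ≤ W' := setIntegral_nonneg measurableSet_Ioo fun s _ => sq_nonneg _
    refine le_trans (key (fun θ s => (g1 (θ, s) * w s) ^ 2 +
        (g2 (θ, s) * w s + φ (θ, s) * deriv w s) ^ 2)
        (((hg1c.mul (hwc.comp continuous_snd)).pow 2).add
          (((hg2c.mul (hwc.comp continuous_snd)).add
            (hφc.mul (hdwc.comp continuous_snd))).pow 2))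
        (fun x y => by positivity) (fun _ => (0:ℝ)) continuous_const ?_) ?_
    · intro θ hθ s hs
      show (g1 (θ, s) * w s) ^ 2 + (g2 (θ, s) * w s + φ (θ, s) * deriv w s) ^ 2 ≤ 0
      rw [hφ0 θ hθ s hs, hg10 θ hθ s hs, hg20 θ hθ s hs]
      simp
    · rw [integral_zero, mul_zero]
      have h1 : 0 ≤ (∫ θ in Set.Ioo (0:ℝ) (2*π), ∫ s in Set.Ioo (0:ℝ) 1,
          (g1 (θ, s) ^ 2 + g2 (θ, s) ^ 2)) * (2*π) ^ 2 * W := by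
        refine mul_nonneg (mul_nonneg ?_ (sq_nonneg _)) hW0
        rw [← hAd]; exact hA0
      have h2 : 0 ≤ Bb * (2*π) ^ 2 * W' :=
        mul_nonneg (mul_nonneg hB0 (sq_nonneg _)) hW'0
      linarith
  · have hBpos : 0 < Bb := lt_of_le_of_ne hB0 (Ne.symm hB)
    have hBne : Bb ≠ 0 := hB
    have hπne : π ≠ 0 := hπ.ne'
    by_cases hA : A = 0
    · -- derivatives of φ vanish on the rectangle
      refine ⟨1 + M ^ 2 / (π * Bb), by positivity, ?_⟩
      intro w hw
      have hwc : Continuous w := hw.continuous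
      have hdwc : Continuous (deriv w) := hw.continuous_deriv le_rfl
      have hD3 : ∀ θ s : ℝ, HasDerivAt (fun t => φ (θ, t) * w t)
          (g2 (θ, s) * w s + φ (θ, s) * deriv w s) s := fun θ s =>
        (hD2 θ s).mul ((hw.differentiable one_ne_zero s).hasDerivAt)
      have he3 : ∀ θ s : ℝ, deriv (fun t => φ (θ, t) * w t) s
          = g2 (θ, s) * w s + φ (θ, s) * deriv w s := fun θ s => (hD3 θ s).deriv
      have hA' : (∫ θ in Set.Ioo (0:ℝ) (2*π), ∫ s in Set.Ioo (0:ℝ) 1,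
          (g1 (θ, s) ^ 2 + g2 (θ, s) ^ 2)) = 0 := by rw [← hAd]; exact hA
      have hg0 := vanish (fun θ s => g1 (θ, s) ^ 2 + g2 (θ, s) ^ 2)
        (((hg1c.pow 2).add (hg2c.pow 2))) (fun x y => by positivity) hA'
      have hg10 : ∀ θ ∈ Set.Ioo (0:ℝ) (2*π), ∀ s ∈ Set.Ioo (0:ℝ) 1, g1 (θ, s) = 0 := by
        intro θ hθ s hs
        have h : g1 (θ, s) ^ 2 + g2 (θ, s) ^ 2 = 0 := hg0 θ hθ s hs
        have h1 : g1 (θ, s) ^ 2 = 0 :=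
          le_antisymm (by nlinarith [sq_nonneg (g2 (θ, s))]) (sq_nonneg _)
        exact pow_eq_zero_iff two_ne_zero |>.mp h1
      have hg20 : ∀ θ ∈ Set.Ioo (0:ℝ) (2*π), ∀ s ∈ Set.Ioo (0:ℝ) 1, g2 (θ, s) = 0 := by
        intro θ hθ s hs
        have h : g1 (θ, s) ^ 2 + g2 (θ, s) ^ 2 = 0 := hg0 θ hθ s hs
        have h1 : g2 (θ, s) ^ 2 = 0 :=
          le_antisymm (by nlinarith [sq_nonneg (g1 (θ, s))]) (sq_nonneg _)
        exact pow_eq_zero_iff two_ne_zero |>.mp h1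
      simp only [he1, he2, he3]
      set W := ∫ s in Set.Ioo (0:ℝ) 1, (w s) ^ 2 with hWd
      set W' := ∫ s in Set.Ioo (0:ℝ) 1, (deriv w s) ^ 2 with hW'd
      have hW0 : 0 ≤ W := setIntegral_nonneg measurableSet_Ioo fun s _ => sq_nonneg _
      have hW'0 : 0 ≤ W' := setIntegral_nonneg measurableSet_Ioo fun s _ => sq_nonneg _
      refine le_trans (key (fun θ s => (g1 (θ, s) * w s) ^ 2 +
          (g2 (θ, s) * w s + φ (θ, s) * deriv w s) ^ 2)
          (((hg1c.mul (hwc.comp continuous_snd)).pow 2).add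
            (((hg2c.mul (hwc.comp continuous_snd)).add
              (hφc.mul (hdwc.comp continuous_snd))).pow 2))
          (fun x y => by positivity)
          (fun s => M ^ 2 * (deriv w s) ^ 2)
          (continuous_const.mul (hdwc.pow 2)) ?_) ?_
      · intro θ hθ s hs
        show (g1 (θ, s) * w s) ^ 2 + (g2 (θ, s) * w s + φ (θ, s) * deriv w s) ^ 2
          ≤ M ^ 2 * (deriv w s) ^ 2
        rw [hg10 θ hθ s hs, hg20 θ hθ s hs]
        have hφ2 := (hsq (θ, s) (hmem θ hθ s hs)).1
        nlinarith [mul_le_mul_of_nonneg_right hφ2 (sq_nonneg (deriv w s))]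
      · have hq : (∫ s in Set.Ioo (0:ℝ) 1, M ^ 2 * (deriv w s) ^ 2) = M ^ 2 * W' := by
          rw [hW'd]; exact integral_const_mul _ _
        rw [hq]
        have hgoal : (∫ θ in Set.Ioo (0:ℝ) (2*π), ∫ s in Set.Ioo (0:ℝ) 1,
            (g1 (θ, s) ^ 2 + g2 (θ, s) ^ 2)) = A := hAd.symm
        rw [hgoal, hA]
        have e2 : (M ^ 2 / (π * Bb)) * (Bb * (2*π) ^ 2 * W') = 4 * π * M ^ 2 * W' := by
          field_simp; ring
        have heq : (1 + M ^ 2 / (π * Bb)) * ((0:ℝ) * (2*π) ^ 2 * W + Bb * (2*π) ^ 2 * W')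
            = Bb * (2*π) ^ 2 * W' + (M ^ 2 / (π * Bb)) * (Bb * (2*π) ^ 2 * W') := by ring
        have h2 : 0 ≤ Bb * (2*π) ^ 2 * W' :=
          mul_nonneg (mul_nonneg hB0 (sq_nonneg _)) hW'0
        have h3 : 0 ≤ M ^ 2 * W' := mul_nonneg (sq_nonneg _) hW'0
        nlinarith [hπ, h2, h3]
    · -- main case
      have hApos : 0 < A := lt_of_le_of_ne hA0 (Ne.symm hA)
      have hAne : A ≠ 0 := hA
      refine ⟨1 + 3 * M ^ 2 / (2 * π * A) + M ^ 2 / (π * Bb), by positivity, ?_⟩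
      intro w hw
      have hwc : Continuous w := hw.continuous
      have hdwc : Continuous (deriv w) := hw.continuous_deriv le_rfl
      have hD3 : ∀ θ s : ℝ, HasDerivAt (fun t => φ (θ, t) * w t)
          (g2 (θ, s) * w s + φ (θ, s) * deriv w s) s := fun θ s =>
        (hD2 θ s).mul ((hw.differentiable one_ne_zero s).hasDerivAt)
      have he3 : ∀ θ s : ℝ, deriv (fun t => φ (θ, t) * w t) s
          = g2 (θ, s) * w s + φ (θ, s) * deriv w s := fun θ s => (hD3 θ s).deriv
      simp only [he1, he2, he3]
      set W := ∫ s in Set.Ioo (0:ℝ) 1, (w s) ^ 2 with hWd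
      set W' := ∫ s in Set.Ioo (0:ℝ) 1, (deriv w s) ^ 2 with hW'd
      have hW0 : 0 ≤ W := setIntegral_nonneg measurableSet_Ioo fun s _ => sq_nonneg _
      have hW'0 : 0 ≤ W' := setIntegral_nonneg measurableSet_Ioo fun s _ => sq_nonneg _
      refine le_trans (key (fun θ s => (g1 (θ, s) * w s) ^ 2 +
          (g2 (θ, s) * w s + φ (θ, s) * deriv w s) ^ 2)
          (((hg1c.mul (hwc.comp continuous_snd)).pow 2).add
            (((hg2c.mul (hwc.comp continuous_snd)).add
              (hφc.mul (hdwc.comp continuous_snd))).pow 2))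
          (fun x y => by positivity)
          (fun s => 3 * M ^ 2 * (w s) ^ 2 + 2 * M ^ 2 * (deriv w s) ^ 2)
          ((continuous_const.mul (hwc.pow 2)).add (continuous_const.mul (hdwc.pow 2))) ?_) ?_
      · intro θ hθ s hs
        show (g1 (θ, s) * w s) ^ 2 + (g2 (θ, s) * w s + φ (θ, s) * deriv w s) ^ 2
          ≤ 3 * M ^ 2 * (w s) ^ 2 + 2 * M ^ 2 * (deriv w s) ^ 2
        obtain ⟨hφ2, hg12, hg22⟩ := hsq (θ, s) (hmem θ hθ s hs)
        nlinarith [mul_le_mul_of_nonneg_right hφ2 (sq_nonneg (deriv w s)),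
          mul_le_mul_of_nonneg_right hg12 (sq_nonneg (w s)),
          mul_le_mul_of_nonneg_right hg22 (sq_nonneg (w s)),
          sq_nonneg (g2 (θ, s) * w s - φ (θ, s) * deriv w s)]
      · have hq : (∫ s in Set.Ioo (0:ℝ) 1,
            (3 * M ^ 2 * (w s) ^ 2 + 2 * M ^ 2 * (deriv w s) ^ 2))
            = 3 * M ^ 2 * W + 2 * M ^ 2 * W' := by
          rw [integral_add (intOn (f := fun s => 3 * M ^ 2 * (w s) ^ 2) (continuous_const.mul (hwc.pow 2)))
            (intOn (f := fun s => 2 * M ^ 2 * (deriv w s) ^ 2) (continuous_const.mul (hdwc.pow 2))),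
            integral_const_mul, integral_const_mul, hWd, hW'd]
        rw [hq]
        have hgoal : (∫ θ in Set.Ioo (0:ℝ) (2*π), ∫ s in Set.Ioo (0:ℝ) 1,
            (g1 (θ, s) ^ 2 + g2 (θ, s) ^ 2)) = A := hAd.symm
        rw [hgoal]
        have e1 : (3 * M ^ 2 / (2 * π * A)) * (A * (2*π) ^ 2 * W) = 6 * π * M ^ 2 * W := by
          field_simp; ring
        have e2 : (M ^ 2 / (π * Bb)) * (Bb * (2*π) ^ 2 * W') = 4 * π * M ^ 2 * W' := by
          field_simp; ring
        have hX : 0 ≤ A * (2*π) ^ 2 * W := mul_nonneg (mul_nonneg hA0 (sq_nonneg _)) hW0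
        have hY : 0 ≤ Bb * (2*π) ^ 2 * W' := mul_nonneg (mul_nonneg hB0 (sq_nonneg _)) hW'0
        have hd1 : 0 ≤ 3 * M ^ 2 / (2 * π * A) :=
          div_nonneg (by positivity) (by positivity)
        have hd2 : 0 ≤ M ^ 2 / (π * Bb) := div_nonneg (sq_nonneg _) (by positivity)
        have heq : (1 + 3 * M ^ 2 / (2 * π * A) + M ^ 2 / (π * Bb))
              * (A * (2*π) ^ 2 * W + Bb * (2*π) ^ 2 * W')
            = (A * (2*π) ^ 2 * W + Bb * (2*π) ^ 2 * W')
              + ((3 * M ^ 2 / (2 * π * A)) * (A * (2*π) ^ 2 * W)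
                + (3 * M ^ 2 / (2 * π * A)) * (Bb * (2*π) ^ 2 * W'))
              + ((M ^ 2 / (π * Bb)) * (A * (2*π) ^ 2 * W)
                + (M ^ 2 / (π * Bb)) * (Bb * (2*π) ^ 2 * W')) := by ring
        nlinarith [mul_nonneg hd1 hY, mul_nonneg hd2 hX]
end

section
/- Let V, W be Hilbert spaces, A : V → V' bounded, self-adjoint, coercive with constant α, and S : V → W' bounded linear satisfying the inf-sup condition with constant β > 0 (sup_{v} ⟨Sv, w⟩/‖v‖ ≥ β‖w‖ for all w ∈ W). Then for every f ∈ V', g ∈ W', the saddle point problem ⟨Au, v⟩ + ⟨Sᵀλ, v⟩ = ⟨f, v⟩ ∀v ∈ V, ⟨Su, w⟩ = ⟨g, w⟩ ∀w ∈ W, has a unique solution (u, λ) ∈ V × W, and ‖u‖_V ≤ (1/α)‖f‖_{V'} + (2‖A‖^{1/2}/(α^{1/2} β)) ‖g‖_{W'}. -/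
open RealInnerProductSpace

noncomputable def rieszOp {X Y : Type*} [NormedAddCommGroup X] [NormedSpace ℝ X]
    [NormedAddCommGroup Y] [InnerProductSpace ℝ Y] [CompleteSpace Y]
    (T : X →L[ℝ] (Y →L[ℝ] ℝ)) : X →L[ℝ] Y :=
  LinearMap.mkContinuous
    { toFun := fun x => (InnerProductSpace.toDual ℝ Y).symm (T x)
      map_add' := by intro x y; simp
      map_smul' := by intro c x; simp }
    ‖T‖ (fun x => by
      rw [LinearMap.coe_mk, AddHom.coe_mk, LinearIsometryEquiv.norm_map]
      exact T.le_opNorm x)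

theorem rieszOp_inner {X Y : Type*} [NormedAddCommGroup X] [NormedSpace ℝ X]
    [NormedAddCommGroup Y] [InnerProductSpace ℝ Y] [CompleteSpace Y]
    (T : X →L[ℝ] (Y →L[ℝ] ℝ)) (x : X) (y : Y) : ⟪rieszOp T x, y⟫ = T x y := by
  simp [rieszOp, LinearMap.mkContinuous_apply]

theorem rieszOp_norm {X Y : Type*} [NormedAddCommGroup X] [NormedSpace ℝ X]
    [NormedAddCommGroup Y] [InnerProductSpace ℝ Y] [CompleteSpace Y]
    (T : X →L[ℝ] (Y →L[ℝ] ℝ)) (x : X) : ‖rieszOp T x‖ = ‖T x‖ := by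
  simp [rieszOp, LinearMap.mkContinuous_apply, LinearIsometryEquiv.norm_map]

theorem csA {V : Type*} [NormedAddCommGroup V] [InnerProductSpace ℝ V]
    (A : V →L[ℝ] (V →L[ℝ] ℝ)) (hsym : ∀ u v : V, A u v = A v u)
    (α : ℝ) (hα : 0 < α) (hcoerc : ∀ v : V, α * ‖v‖ ^ 2 ≤ A v v)
    (u v : V) : (A u v) ^ 2 ≤ A u u * A v v := by
  by_cases hv : v = 0
  · simp [hv]
  · have hr : 0 < A v v :=
      lt_of_lt_of_le (mul_pos hα (pow_pos (norm_pos_iff.mpr hv) 2)) (hcoerc v)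
    have hpos : 0 ≤ A ((A v v) • u - (A u v) • v) ((A v v) • u - (A u v) • v) :=
      le_trans (by positivity) (hcoerc _)
    have hexp : A ((A v v) • u - (A u v) • v) ((A v v) • u - (A u v) • v)
        = (A v v)^2 * A u u - 2 * (A v v) * (A u v)^2 + (A u v)^2 * (A v v) := by
      simp [map_sub, map_smul, ContinuousLinearMap.sub_apply, ContinuousLinearMap.smul_apply,
        hsym u v]
      ring
    rw [hexp] at hpos
    nlinarith [hpos, hr]

set_option maxHeartbeats 1000000 in
/-- Abstract saddle point (Brezzi) theory: for `A : V → V'` bounded,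
self-adjoint and coercive with constant `α > 0` and `S : V → W'` bounded satisfying
the inf-sup condition with constant `β > 0` (`sup_v ⟨Sv,w⟩/‖v‖ = ‖Sᵀw‖ ≥ β‖w‖`),
for every `f ∈ V'`, `g ∈ W'` the saddle point problem
`⟨Au,v⟩ + ⟨Sᵀλ,v⟩ = ⟨f,v⟩ ∀v`, `⟨Su,w⟩ = ⟨g,w⟩ ∀w` has a unique solution
`(u,λ) ∈ V × W`, which satisfies `‖u‖ ≤ (1/α)‖f‖ + (2‖A‖^{1/2}/(α^{1/2}β))‖g‖`. -/
theorem stmt18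
    {V W : Type*}
    [NormedAddCommGroup V] [InnerProductSpace ℝ V] [CompleteSpace V]
    [NormedAddCommGroup W] [InnerProductSpace ℝ W] [CompleteSpace W]
    (A : V →L[ℝ] (V →L[ℝ] ℝ))
    (hsym : ∀ u v : V, A u v = A v u)
    (α : ℝ) (hα : 0 < α)
    (hcoerc : ∀ v : V, α * ‖v‖ ^ 2 ≤ A v v)
    (S : V →L[ℝ] (W →L[ℝ] ℝ))
    (β : ℝ) (hβ : 0 < β)
    (hinfsup : ∀ w : W, β * ‖w‖ ≤ ‖S.flip w‖)
    (f : V →L[ℝ] ℝ) (g : W →L[ℝ] ℝ) :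
    (∃! p : V × W,
        (∀ v : V, A p.1 v + S.flip p.2 v = f v) ∧ (∀ w : W, S p.1 w = g w)) ∧
      ∀ p : V × W,
        ((∀ v : V, A p.1 v + S.flip p.2 v = f v) ∧ (∀ w : W, S p.1 w = g w)) →
          ‖p.1‖ ≤ (1 / α) * ‖f‖ +
            (2 * Real.sqrt ‖A‖ / (Real.sqrt α * β)) * ‖g‖ := by
  rcases le_or_gt α ‖A‖ with hAle | hAgt
  swap
  · -- trivial case: V and W are trivial
    have hV : ∀ v : V, v = 0 := by
      intro v
      have h1 : A v v ≤ ‖A‖ * ‖v‖ ^ 2 := by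
        have h2 : A v v ≤ |A v v| := le_abs_self _
        have h3 : ‖A v v‖ ≤ ‖A v‖ * ‖v‖ := (A v).le_opNorm v
        have h4 : ‖A v‖ ≤ ‖A‖ * ‖v‖ := A.le_opNorm v
        rw [Real.norm_eq_abs] at h3
        nlinarith [norm_nonneg v, norm_nonneg (A v)]
      have h6 := hcoerc v
      have h8 : ‖v‖ ^ 2 ≤ 0 := by nlinarith
      have h9 : ‖v‖ ^ 2 = 0 := le_antisymm h8 (sq_nonneg _)
      exact norm_eq_zero.mp (sq_eq_zero_iff.mp h9)
    have hW : ∀ w : W, w = 0 := by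
      intro w
      have h0 : S.flip w = 0 := by
        ext v; rw [hV v]; simp
      have := hinfsup w
      rw [h0, norm_zero] at this
      have : ‖w‖ = 0 := le_antisymm (by nlinarith [norm_nonneg w]) (norm_nonneg w)
      exact norm_eq_zero.mp this
    have hsol : (∀ v : V, A (0:V) v + S.flip (0:W) v = f v) ∧
        (∀ w : W, S (0:V) w = g w) := by
      constructor
      · intro v; rw [hV v]; simp
      · intro w; rw [hW w]; simp
    refine ⟨⟨((0:V), (0:W)), hsol, ?_⟩, ?_⟩
    · intro p _; exact Prod.ext (hV p.1) (hW p.2)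
    · intro p _
      rw [hV p.1, norm_zero]
      positivity
  -- main case
  have hA0 : (0:ℝ) < ‖A‖ := lt_of_lt_of_le hα hAle
  have hco : IsCoercive A := ⟨α, hα, fun u => by simpa [pow_two, mul_assoc] using hcoerc u⟩
  obtain ⟨E, hE⟩ : ∃ E : V ≃L[ℝ] V, ∀ v w : V, ⟪E v, w⟫ = A v w :=
    ⟨hco.continuousLinearEquivOfBilin, fun v w => hco.continuousLinearEquivOfBilin_apply v w⟩
  obtain ⟨Bp, hBp, hBpn⟩ : ∃ Bp : W →L[ℝ] V,
      (∀ (w : W) (v : V), ⟪Bp w, v⟫ = S v w) ∧ ∀ w : W, β * ‖w‖ ≤ ‖Bp w‖ :=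
    ⟨rieszOp S.flip, fun w v => by rw [rieszOp_inner]; rfl,
      fun w => by rw [rieszOp_norm]; exact hinfsup w⟩
  obtain ⟨Bt, hBt⟩ : ∃ Bt : V →L[ℝ] W, ∀ (v : V) (w : W), ⟪Bt v, w⟫ = S v w :=
    ⟨rieszOp S, fun v w => by rw [rieszOp_inner]⟩
  -- norm bound on E
  have hEnorm : ∀ y : V, ‖E y‖ ≤ ‖A‖ * ‖y‖ := by
    intro y
    have h1 : ‖E y‖ * ‖E y‖ ≤ (‖A‖ * ‖y‖) * ‖E y‖ := by
      have h2 : ⟪E y, E y⟫ = A y (E y) := hE y (E y)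
      have h3 : ‖E y‖ * ‖E y‖ = ⟪E y, E y⟫ := (real_inner_self_eq_norm_mul_norm (E y)).symm
      have h4 : A y (E y) ≤ ‖A y‖ * ‖E y‖ := by
        have := (A y).le_opNorm (E y)
        rw [Real.norm_eq_abs] at this
        exact le_trans (le_abs_self _) this
      have h5 : ‖A y‖ ≤ ‖A‖ * ‖y‖ := A.le_opNorm y
      nlinarith [norm_nonneg (E y)]
    rcases eq_or_lt_of_le (norm_nonneg (E y)) with h | h
    · rw [← h]; positivity
    · exact le_of_mul_le_mul_right h1 h
  -- coercivity of E.symm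
  have hEsym : ∀ x : V, (α / ‖A‖ ^ 2) * (‖x‖ * ‖x‖) ≤ ⟪E.symm x, x⟫ := by
    intro x
    set y := E.symm x with hy
    have hx : E y = x := E.apply_symm_apply x
    have h1 : ⟪y, x⟫ = A y y := by
      rw [← hx, real_inner_comm, hE]
    have h2 : α * ‖y‖ ^ 2 ≤ A y y := hcoerc y
    have h3 : ‖x‖ ≤ ‖A‖ * ‖y‖ := by rw [← hx]; exact hEnorm y
    rw [h1]
    have h4 : ‖x‖ * ‖x‖ ≤ (‖A‖ * ‖y‖) * (‖A‖ * ‖y‖) :=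
      mul_le_mul h3 h3 (norm_nonneg x) (by positivity)
    have h5 : (α / ‖A‖ ^ 2) * ((‖A‖ * ‖y‖) * (‖A‖ * ‖y‖)) = α * ‖y‖ ^ 2 := by
      field_simp
    calc (α / ‖A‖ ^ 2) * (‖x‖ * ‖x‖)
        ≤ (α / ‖A‖ ^ 2) * ((‖A‖ * ‖y‖) * (‖A‖ * ‖y‖)) :=
          mul_le_mul_of_nonneg_left h4 (by positivity)
      _ = α * ‖y‖ ^ 2 := h5
      _ ≤ A y y := h2
  -- the Schur complement operator and its Lax-Milgram
  obtain ⟨F, hFC⟩ : ∃ F : W ≃L[ℝ] W, ∀ w : W, F w = Bt (E.symm (Bp w)) := by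
    set C : W →L[ℝ] W := Bt.comp ((E.symm.toContinuousLinearMap).comp Bp) with hCdef
    have hCapp : ∀ w : W, C w = Bt (E.symm (Bp w)) := fun w => rfl
    set c : W →L[ℝ] (W →L[ℝ] ℝ) := (innerSL ℝ).comp C with hcdef
    have hcapp : ∀ w₁ w₂ : W, c w₁ w₂ = ⟪C w₁, w₂⟫ := fun _ _ => rfl
    have hcc : IsCoercive c := by
      refine ⟨α * β ^ 2 / ‖A‖ ^ 2, by positivity, ?_⟩
      intro w
      have h1 : c w w = ⟪E.symm (Bp w), Bp w⟫ := by
        rw [hcapp, hCapp, hBt, ← hBp]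
        exact real_inner_comm _ _
      have h3 := hBpn w
      have h4 : β * ‖w‖ ≥ 0 := by positivity
      have h5 : (β * ‖w‖) * (β * ‖w‖) ≤ ‖Bp w‖ * ‖Bp w‖ :=
        mul_le_mul h3 h3 h4 (norm_nonneg _)
      rw [h1]
      calc α * β ^ 2 / ‖A‖ ^ 2 * ‖w‖ * ‖w‖
          = (α / ‖A‖ ^ 2) * ((β * ‖w‖) * (β * ‖w‖)) := by ring
        _ ≤ (α / ‖A‖ ^ 2) * (‖Bp w‖ * ‖Bp w‖) :=
            mul_le_mul_of_nonneg_left h5 (by positivity)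
        _ ≤ ⟪E.symm (Bp w), Bp w⟫ := hEsym (Bp w)
    refine ⟨hcc.continuousLinearEquivOfBilin, fun w => ?_⟩
    refine ext_inner_right ℝ ?_
    intro w₂
    rw [hcc.continuousLinearEquivOfBilin_apply, hcapp, hCapp]
  have hBpBp : ∀ w₁ w₂ : W, ⟪Bt (Bp w₁), w₂⟫ = ⟪Bp w₂, Bp w₁⟫ := by
    intro w₁ w₂
    rw [hBt, ← hBp]
  obtain ⟨G, hGD⟩ : ∃ G : W ≃L[ℝ] W, ∀ w : W, G w = Bt (Bp w) := by
    set D : W →L[ℝ] W := Bt.comp Bp with hDdef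
    have hDapp : ∀ w : W, D w = Bt (Bp w) := fun w => rfl
    set d : W →L[ℝ] (W →L[ℝ] ℝ) := (innerSL ℝ).comp D with hddef
    have hdapp : ∀ w₁ w₂ : W, d w₁ w₂ = ⟪D w₁, w₂⟫ := fun _ _ => rfl
    have hdd : IsCoercive d := by
      refine ⟨β ^ 2, by positivity, ?_⟩
      intro w
      have h1 : d w w = ⟪Bp w, Bp w⟫ := by rw [hdapp, hDapp, hBpBp]
      have h3 := hBpn w
      have h5 : (β * ‖w‖) * (β * ‖w‖) ≤ ‖Bp w‖ * ‖Bp w‖ :=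
        mul_le_mul h3 h3 (by positivity) (norm_nonneg _)
      rw [h1, real_inner_self_eq_norm_mul_norm]
      nlinarith [h5]
    refine ⟨hdd.continuousLinearEquivOfBilin, fun w => ?_⟩
    refine ext_inner_right ℝ ?_
    intro w₂
    rw [hdd.continuousLinearEquivOfBilin_apply, hdapp, hDapp]
  have hGcoer : ∀ w : W, β ^ 2 * ‖w‖ * ‖w‖ ≤ ⟪G w, w⟫ := by
    intro w
    rw [hGD, hBpBp, real_inner_self_eq_norm_mul_norm]
    have h3 := hBpn w
    have h5 : (β * ‖w‖) * (β * ‖w‖) ≤ ‖Bp w‖ * ‖Bp w‖ :=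
      mul_le_mul h3 h3 (by positivity) (norm_nonneg _)
    nlinarith [h5]
  -- Riesz representatives of f and g
  obtain ⟨fb, hfb⟩ : ∃ fb : V, ∀ v : V, ⟪fb, v⟫ = f v :=
    ⟨(InnerProductSpace.toDual ℝ V).symm f, fun v => InnerProductSpace.toDual_symm_apply⟩
  obtain ⟨gb, hgb⟩ : ∃ gb : W, ∀ w : W, ⟪gb, w⟫ = g w :=
    ⟨(InnerProductSpace.toDual ℝ W).symm g, fun w => InnerProductSpace.toDual_symm_apply⟩
  -- the solution
  obtain ⟨lam, hlam⟩ : ∃ lam : W, F lam = Bt (E.symm fb) - gb :=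
    ⟨F.symm _, F.apply_symm_apply _⟩
  obtain ⟨u, hudef⟩ : ∃ u : V, u = E.symm (fb - Bp lam) := ⟨_, rfl⟩
  have heq1 : ∀ v : V, A u v + S.flip lam v = f v := by
    intro v
    have h1 : A u v = ⟪E u, v⟫ := (hE u v).symm
    have h2 : E u = fb - Bp lam := by rw [hudef]; exact E.apply_symm_apply _
    rw [h1, h2, inner_sub_left, hfb, hBp]
    simp [ContinuousLinearMap.flip_apply]
  have heq2 : ∀ w : W, S u w = g w := by
    intro w
    have h1 : Bt u = Bt (E.symm fb) - Bt (E.symm (Bp lam)) := by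
      rw [hudef, map_sub, map_sub]
    have h3 : Bt (E.symm (Bp lam)) = Bt (E.symm fb) - gb := by
      rw [← hFC]; exact hlam
    have h4 : Bt u = gb := by rw [h1, h3]; abel
    rw [← hBt, h4, hgb]
  -- uniqueness
  have huniq : ∀ p : V × W,
      ((∀ v : V, A p.1 v + S.flip p.2 v = f v) ∧ (∀ w : W, S p.1 w = g w)) →
      p = (u, lam) := by
    intro p hp
    have hd1 : ∀ v : V, A (p.1 - u) v + S.flip (p.2 - lam) v = 0 := by
      intro v
      have := hp.1 v
      have := heq1 v
      simp only [map_sub, ContinuousLinearMap.sub_apply]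
      linarith
    have hd2 : ∀ w : W, S (p.1 - u) w = 0 := by
      intro w
      have := hp.2 w
      have := heq2 w
      simp only [map_sub, ContinuousLinearMap.sub_apply]
      linarith
    have hduz : p.1 - u = 0 := by
      have h1 := hd1 (p.1 - u)
      have h2 : S.flip (p.2 - lam) (p.1 - u) = S (p.1 - u) (p.2 - lam) := rfl
      rw [h2, hd2 (p.2 - lam), add_zero] at h1
      have h3 := hcoerc (p.1 - u)
      rw [h1] at h3
      have h8 : ‖p.1 - u‖ ^ 2 ≤ 0 := by nlinarith
      have h9 : ‖p.1 - u‖ ^ 2 = 0 := le_antisymm h8 (sq_nonneg _)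
      exact norm_eq_zero.mp (sq_eq_zero_iff.mp h9)
    have hdlz : p.2 - lam = 0 := by
      have h1 : S.flip (p.2 - lam) = 0 := by
        ext v
        have := hd1 v
        rw [hduz] at this
        simpa using this
      have h2 := hinfsup (p.2 - lam)
      rw [h1, norm_zero] at h2
      have : ‖p.2 - lam‖ = 0 := le_antisymm (by nlinarith [norm_nonneg (p.2 - lam)]) (norm_nonneg _)
      exact norm_eq_zero.mp this
    exact Prod.ext (sub_eq_zero.mp hduz) (sub_eq_zero.mp hdlz)
  -- a priori bound
  have hbound : ∀ p : V × W,
      ((∀ v : V, A p.1 v + S.flip p.2 v = f v) ∧ (∀ w : W, S p.1 w = g w)) →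
      ‖p.1‖ ≤ (1 / α) * ‖f‖ + (2 * Real.sqrt ‖A‖ / (Real.sqrt α * β)) * ‖g‖ := by
    intro p hp
    obtain ⟨μ, hGμ⟩ : ∃ μ : W, G μ = gb := ⟨G.symm _, G.apply_symm_apply _⟩
    obtain ⟨v0, hv0def⟩ : ∃ v0 : V, v0 = Bp μ := ⟨_, rfl⟩
    have hBtv0 : Bt v0 = gb := by
      rw [hv0def, ← hGD]
      exact hGμ
    have hSv0 : ∀ w : W, S v0 w = g w := fun w => by rw [← hBt, hBtv0, hgb]
    -- norm of μ and v0
    have hv0sq : ‖v0‖ * ‖v0‖ = g μ := by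
      rw [← real_inner_self_eq_norm_mul_norm, hv0def, hBp, ← hv0def, hSv0]
    have hμb : ‖μ‖ ≤ ‖g‖ / β ^ 2 := by
      have h1 : β ^ 2 * ‖μ‖ * ‖μ‖ ≤ g μ := by
        have := hGcoer μ
        rwa [hGμ, hgb] at this
      have h3 : g μ ≤ ‖g‖ * ‖μ‖ := by
        have := g.le_opNorm μ
        rw [Real.norm_eq_abs] at this
        exact le_trans (le_abs_self _) this
      rcases eq_or_lt_of_le (norm_nonneg μ) with h | h
      · rw [← h]; positivity
      · rw [le_div_iff₀ (by positivity : (0:ℝ) < β ^ 2)]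
        nlinarith
    have hv0b : ‖v0‖ ≤ ‖g‖ / β := by
      have h3 : g μ ≤ ‖g‖ * ‖μ‖ := by
        have := g.le_opNorm μ
        rw [Real.norm_eq_abs] at this
        exact le_trans (le_abs_self _) this
      have h4 : ‖v0‖ * ‖v0‖ ≤ ‖g‖ * (‖g‖ / β ^ 2) := by
        rw [hv0sq]
        exact le_trans h3 (mul_le_mul_of_nonneg_left hμb (norm_nonneg g))
      have h5 : ‖g‖ * (‖g‖ / β ^ 2) = (‖g‖ / β) * (‖g‖ / β) := by ring
      rw [h5] at h4
      nlinarith [norm_nonneg v0, norm_nonneg g, div_nonneg (norm_nonneg g) hβ.le]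
    -- the reduced part
    obtain ⟨w0, hw0def⟩ : ∃ w0 : V, w0 = p.1 - v0 := ⟨_, rfl⟩
    have hSw0 : ∀ w : W, S w0 w = 0 := by
      intro w
      rw [hw0def, map_sub, ContinuousLinearMap.sub_apply, hp.2 w, hSv0 w, sub_self]
    have hAw0 : A p.1 w0 = f w0 := by
      have h1 := hp.1 w0
      have h2 : S.flip p.2 w0 = S w0 p.2 := rfl
      rw [h2, hSw0] at h1
      linarith
    have hAww : A w0 w0 = f w0 - A v0 w0 := by
      have h0 : A w0 w0 = A p.1 w0 - A v0 w0 := by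
        rw [hw0def]
        rw [show A (p.1 - v0) = A p.1 - A v0 from map_sub A p.1 v0,
          ContinuousLinearMap.sub_apply]
      rw [h0, hAw0]
    have haw : 0 ≤ A w0 w0 := le_trans (by positivity) (hcoerc w0)
    set s : ℝ := Real.sqrt (A w0 w0) with hsdef
    have hs0 : 0 ≤ s := Real.sqrt_nonneg _
    have hssq : s ^ 2 = A w0 w0 := Real.sq_sqrt haw
    have hs1 : Real.sqrt α * ‖w0‖ ≤ s := by
      rw [hsdef]
      have : Real.sqrt (α * ‖w0‖ ^ 2) ≤ Real.sqrt (A w0 w0) :=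
        Real.sqrt_le_sqrt (hcoerc w0)
      rwa [Real.sqrt_mul hα.le, Real.sqrt_sq (norm_nonneg w0)] at this
    have hAv0v0 : A v0 v0 ≤ ‖A‖ * ‖v0‖ ^ 2 := by
      have h2 : A v0 v0 ≤ |A v0 v0| := le_abs_self _
      have h3 : ‖A v0 v0‖ ≤ ‖A v0‖ * ‖v0‖ := (A v0).le_opNorm v0
      have h4 : ‖A v0‖ ≤ ‖A‖ * ‖v0‖ := A.le_opNorm v0
      rw [Real.norm_eq_abs] at h3
      nlinarith [norm_nonneg v0, norm_nonneg (A v0)]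
    have hAv0v0' : 0 ≤ A v0 v0 := le_trans (by positivity) (hcoerc v0)
    have hAv0w0 : |A v0 w0| ≤ Real.sqrt ‖A‖ * ‖v0‖ * s := by
      have h1 : (A v0 w0) ^ 2 ≤ A v0 v0 * A w0 w0 := csA A hsym α hα hcoerc v0 w0
      have h2 : |A v0 w0| ≤ Real.sqrt (A v0 v0 * A w0 w0) := by
        calc |A v0 w0| = Real.sqrt ((A v0 w0) ^ 2) := (Real.sqrt_sq_eq_abs _).symm
          _ ≤ Real.sqrt (A v0 v0 * A w0 w0) := Real.sqrt_le_sqrt h1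
      have h3 : Real.sqrt (A v0 v0 * A w0 w0) ≤ Real.sqrt ((‖A‖ * ‖v0‖ ^ 2) * A w0 w0) :=
        Real.sqrt_le_sqrt (mul_le_mul_of_nonneg_right hAv0v0 haw)
      have h4 : Real.sqrt ((‖A‖ * ‖v0‖ ^ 2) * A w0 w0)
          = Real.sqrt ‖A‖ * ‖v0‖ * s := by
        rw [Real.sqrt_mul (by positivity), Real.sqrt_mul hA0.le,
          Real.sqrt_sq (norm_nonneg v0), hsdef]
      calc |A v0 w0| ≤ Real.sqrt (A v0 v0 * A w0 w0) := h2
        _ ≤ Real.sqrt ((‖A‖ * ‖v0‖ ^ 2) * A w0 w0) := h3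
        _ = Real.sqrt ‖A‖ * ‖v0‖ * s := h4
    have hfw0 : f w0 ≤ ‖f‖ * ‖w0‖ := by
      have := f.le_opNorm w0
      rw [Real.norm_eq_abs] at this
      exact le_trans (le_abs_self _) this
    have hsa : (0:ℝ) < Real.sqrt α := Real.sqrt_pos.mpr hα
    have hw0s : ‖w0‖ ≤ s / Real.sqrt α := by
      rw [le_div_iff₀ hsa]
      linarith [hs1]
    -- s^2 ≤ K s
    set K : ℝ := ‖f‖ / Real.sqrt α + Real.sqrt ‖A‖ * ‖v0‖ with hKdef
    have hK0 : 0 ≤ K := by positivity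
    have hsK : s ≤ K := by
      have h1 : s ^ 2 ≤ ‖f‖ * ‖w0‖ + Real.sqrt ‖A‖ * ‖v0‖ * s := by
        rw [hssq, hAww]
        have := neg_abs_le (A v0 w0)
        linarith [hAv0w0, hfw0]
      have h2 : ‖f‖ * ‖w0‖ ≤ ‖f‖ * (s / Real.sqrt α) :=
        mul_le_mul_of_nonneg_left hw0s (norm_nonneg f)
      have h3 : s ^ 2 ≤ K * s := by
        rw [hKdef]
        have : ‖f‖ * (s / Real.sqrt α) = ‖f‖ / Real.sqrt α * s := by ring
        nlinarith [h1, h2]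
      rcases eq_or_lt_of_le hs0 with h | h
      · rw [← h]; exact hK0
      · have := h3
        rw [pow_two] at this
        exact le_of_mul_le_mul_right (by nlinarith) h
    have hw0b : ‖w0‖ ≤ K / Real.sqrt α :=
      le_trans hw0s (by gcongr)
    have hup : ‖p.1‖ ≤ ‖w0‖ + ‖v0‖ := by
      have : p.1 = w0 + v0 := by rw [hw0def]; abel
      rw [this]
      exact norm_add_le _ _
    -- final arithmetic
    have hsasa : Real.sqrt α * Real.sqrt α = α := Real.mul_self_sqrt hα.le
    have hsA : Real.sqrt α ≤ Real.sqrt ‖A‖ := Real.sqrt_le_sqrt hAle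
    set r : ℝ := Real.sqrt ‖A‖ / Real.sqrt α with hrdef
    have hr1 : 1 ≤ r := (one_le_div hsa).mpr hsA
    have hKsa : K / Real.sqrt α = ‖f‖ / α + r * ‖v0‖ := by
      rw [hKdef, hrdef, add_div, div_div, hsasa]
      ring
    have h1 : ‖p.1‖ ≤ ‖f‖ / α + r * ‖v0‖ + ‖v0‖ := by
      calc ‖p.1‖ ≤ ‖w0‖ + ‖v0‖ := hup
        _ ≤ K / Real.sqrt α + ‖v0‖ := by linarith [hw0b]
        _ = ‖f‖ / α + r * ‖v0‖ + ‖v0‖ := by rw [hKsa]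
    have hrhs : (2 * Real.sqrt ‖A‖ / (Real.sqrt α * β)) * ‖g‖ = 2 * r * (‖g‖ / β) := by
      rw [hrdef]; field_simp
    rw [hrhs]
    have hgβ : 0 ≤ ‖g‖ / β := by positivity
    have h2 : r * ‖v0‖ + ‖v0‖ ≤ 2 * r * (‖g‖ / β) := by
      nlinarith [mul_le_mul_of_nonneg_left hv0b (le_trans zero_le_one hr1),
        mul_le_mul_of_nonneg_left hgβ (sub_nonneg.mpr hr1), hv0b, hr1]
    have h3 : ‖f‖ / α = 1 / α * ‖f‖ := by ring
    linarith [h1, h2]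
  exact ⟨⟨(u, lam), ⟨heq1, heq2⟩, huniq⟩, hbound⟩
end
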